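/- Let S be a Polish space with a fixed complete metric, U a standard Borel space, and ν a kernel from ℝ to S such that for every x ∈ ℝ the measure ν_x has full topological support S. Let μ and μ_1, μ_2, … be bounded kernels from S × ℝ to U such that each μ_n is continuous in total variation on S × G_n for some open set G_n ⊆ ℝ (i.e. (s,x) ↦ μ_{n,(s,x)} is continuous with respect to the total variation norm on that set). Suppose h_n : S × ℝ → [0,∞) are measurable functions with h_n → 0 uniformly on bounded subsets of S × ℝ, and suppose that for every n and every x ∈ ℝ, ν_x({s ∈ S : ‖μ_{(s,x)} − μ_{n,(s,x)}‖ > h_n(s,x)}) = 0. Then there exists a bounded kernel μ′ from S × ℝ to U such that: (a) for every x ∈ ℝ, μ_{(s,x)} = μ′_{(s,x)} for ν_x-almost every s ∈ S; and (b) (s,x) ↦ μ′_{(s,x)} is continuous in total variation on S × limsup_n G_n, where limsup_n G_n = ⋂_n ⋃_{k≥n} G_k. -/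

import Mathlib

open MeasureTheory ProbabilityTheory Filter
open scoped ENNReal

/-- The total variation distance between two (finite) measures, via the Jordan decomposition:
`‖α − β‖ = (α − β)(univ) + (β − α)(univ)`, where `−` is truncated subtraction of measures. -/
noncomputable def tvDist {T : Type*} [MeasurableSpace T] (α β : Measure T) : ℝ≥0∞ :=
  (α - β) Set.univ + (β - α) Set.univ

open Topology

/-!
On a slice `S × {x}` the bound `‖μ - μₙ‖ ≤ hₙ` holds off a `ν_x`-null set for every `n`, hence,
`ν_x` having full support, on a dense set of good points. Comparing `μₙ` and `μₘ` at good
points near `s` and using their TV-continuity, `‖μₙ - μₘ‖` at `(s, x)` is at most twice the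
supremum of `hₙ, hₘ` near `(s, x)`. So for `x ∈ limsup Gₙ` the `μₙ(s, x)` with `x ∈ Gₙ` are
Cauchy in total variation, locally uniformly in `(s, x)`, and converge to a finite measure
`μ'(s, x)`; elsewhere `μ' = μ`. As a locally uniform limit of TV-continuous maps, `μ'` is
TV-continuous on `S × limsup Gₙ`; it equals `μ` at every good point, and density and continuity
bound its mass by that of `μ`.
-/

namespace MeasureTheory.Measure

variable {T : Type*} [MeasurableSpace T] {α β : Measure T} [IsFiniteMeasure α] [IsFiniteMeasure β]

theorem apply_add_sub_apply {A : Set T} (hA : MeasurableSet A) :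
    α A + (β - α) A = β A + (α - β) A := by
  have h := congrArg (fun v => v A) (sub_toSignedMeasure_eq_toSignedMeasure_sub (μ := α) (ν := β))
  simp only [toSignedMeasure_sub_apply hA, measureReal_def] at h
  rw [← ENNReal.toReal_eq_toReal_iff' (by finiteness) (by finiteness),
    ENNReal.toReal_add (by finiteness) (by finiteness),
    ENNReal.toReal_add (by finiteness) (by finiteness)]
  linarith

theorem le_sub_add : α ≤ α - β + β :=
  le_iff.2 fun A hA => by
    rw [add_apply, add_comm _ (β A), ← apply_add_sub_apply hA]
    exact le_self_add

theorem sub_le_sub_add (γ : Measure T) [IsFiniteMeasure γ] : α - γ ≤ α - β + (β - γ) :=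
  sub_le_of_le_add <|
    calc α ≤ α - β + β := le_sub_add
      _ ≤ α - β + (β - γ + γ) := by gcongr; exact le_sub_add
      _ = α - β + (β - γ) + γ := (add_assoc _ _ _).symm

theorem sub_apply_univ_le {c : ℝ≥0∞} (h : ∀ A, MeasurableSet A → α A ≤ β A + c) :
    (α - β) Set.univ ≤ c := by
  obtain ⟨s, hs, hαβ, hβα⟩ := mutually_singular_measure_sub (μ := α) (ν := β)
  have hsc := apply_add_sub_apply (α := α) (β := β) hs.compl
  rw [hβα, add_zero] at hsc
  rw [← measure_add_measure_compl hs, hαβ, zero_add]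
  refine (ENNReal.add_le_add_iff_left (measure_ne_top β sᶜ)).1 ?_
  rw [← hsc]
  exact h _ hs.compl

end MeasureTheory.Measure

section TotalVariation

variable {T : Type*} [MeasurableSpace T]

theorem tvDist_comm (α β : Measure T) : tvDist α β = tvDist β α := add_comm _ _

theorem tvDist_zero_right (α : Measure T) : tvDist α 0 = α Set.univ := by
  simp [tvDist, Measure.sub_zero, Measure.zero_sub]

variable {α β : Measure T} [IsFiniteMeasure α] [IsFiniteMeasure β]

theorem apply_le_add_tvDist {A : Set T} (hA : MeasurableSet A) : α A ≤ β A + tvDist α β :=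
  calc α A ≤ (α - β + β) A := Measure.le_iff.1 Measure.le_sub_add A hA
    _ = β A + (α - β) A := by rw [Measure.add_apply, add_comm]
    _ ≤ β A + tvDist α β := by
      gcongr; exact (measure_mono (Set.subset_univ A)).trans le_self_add

theorem tvDist_le_of_forall_apply {c : ℝ≥0∞}
    (h : ∀ A, MeasurableSet A → α A ≤ β A + c ∧ β A ≤ α A + c) : tvDist α β ≤ c + c :=
  add_le_add (Measure.sub_apply_univ_le fun A hA => (h A hA).1)
    (Measure.sub_apply_univ_le fun A hA => (h A hA).2)

theorem tvDist_triangle (γ : Measure T) [IsFiniteMeasure γ] :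
    tvDist α γ ≤ tvDist α β + tvDist β γ :=
  calc tvDist α γ
      ≤ ((α - β) Set.univ + (β - γ) Set.univ) + ((γ - β) Set.univ + (β - α) Set.univ) :=
        add_le_add (Measure.le_iff'.1 (Measure.sub_le_sub_add γ) _)
          (Measure.le_iff'.1 (Measure.sub_le_sub_add α) _)
    _ = tvDist α β + tvDist β γ := by unfold tvDist; ring

end TotalVariation

theorem ENNReal.tendsto_limsup_of_forall_eventually_le_add {ι : Type*} {l : Filter ι} [l.NeBot]
    {u : ι → ℝ≥0∞} (h : ∀ ε > 0, ∀ᶠ p in l ×ˢ l, u p.1 ≤ u p.2 + ε) :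
    Tendsto u l (𝓝 (limsup u l)) := by
  refine tendsto_of_liminf_eq_limsup (le_antisymm liminf_le_limsup ?_) rfl
  refine ENNReal.le_of_forall_pos_le_add fun ε hε _ => ?_
  obtain ⟨s, hs, hsu⟩ := (eventually_prod_self_iff (r := fun m n => u m ≤ u n + ε)).1
    (h ε (by exact_mod_cast hε))
  have hlimsup : ∀ n ∈ s, limsup u l - ε ≤ u n := fun n hn =>
    tsub_le_iff_right.2 <| limsup_le_of_le (by isBoundedDefault) <|
      eventually_of_mem hs fun m hm => hsu m hm n hn
  exact tsub_le_iff_right.1 <| le_liminf_of_le (by isBoundedDefault) (eventually_of_mem hs hlimsup)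

theorem ENNReal.limsup_indicator {ι : Type*} (l : Filter ι) (J : Set ι) (u : ι → ℝ≥0∞) :
    limsup (J.indicator u) l = limsup u (l ⊓ 𝓟 J) := by
  classical
  rw [← Set.piecewise_eq_indicator, limsup_piecewise, blimsup_eq_limsup]
  have hzero : blimsup (0 : ι → ℝ≥0∞) l (· ∉ J) = 0 := by
    rw [blimsup_eq_limsup, Pi.zero_def, ← ENNReal.bot_eq_zero, limsup_const_bot]
  rw [hzero, max_zero]
  rfl

theorem TendstoUniformlyOn.eventually_forall_ofReal_le {ι X : Type*} {l : Filter ι}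
    {F : ι → X → ℝ} {B : Set X} (hF : TendstoUniformlyOn F (fun _ => 0) l B) {ε : ℝ≥0∞}
    (hε : 0 < ε) : ∀ᶠ i in l, ∀ x ∈ B, ENNReal.ofReal (F i x) ≤ ε := by
  obtain ⟨r, hr0, hrε⟩ := ENNReal.lt_iff_exists_nnreal_btwn.1 hε
  filter_upwards [Metric.tendstoUniformlyOn_iff.1 hF r (by exact_mod_cast hr0)] with i hi x hx
  have hFr : F i x ≤ r := by
    have := hi x hx
    rw [Real.dist_eq, zero_sub, abs_neg] at this
    exact (le_abs_self _).trans this.le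
  calc ENNReal.ofReal (F i x) ≤ ENNReal.ofReal r := ENNReal.ofReal_le_ofReal hFr
    _ ≤ ε := by rw [ENNReal.ofReal_coe_nnreal]; exact hrε.le

section TVCauchy

variable {T ι : Type*} [MeasurableSpace T]

def TVCauchy (ρ : ι → Measure T) (l : Filter ι) : Prop :=
  ∀ ε > 0, ∀ᶠ p in l ×ˢ l, tvDist (ρ p.1) (ρ p.2) ≤ ε

variable {ρ : ι → Measure T} {l : Filter ι} [l.NeBot]

theorem TVCauchy.exists_mem_forall_tvDist_le (hρ : TVCauchy ρ l) {ε : ℝ≥0∞} (hε : 0 < ε) :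
    ∃ i₀, ∃ s ∈ l, ∀ i ∈ s, tvDist (ρ i) (ρ i₀) ≤ ε := by
  obtain ⟨s, hs, hsρ⟩ := (eventually_prod_self_iff
    (r := fun m n => tvDist (ρ m) (ρ n) ≤ ε)).1 (hρ ε hε)
  obtain ⟨i₀, hi₀⟩ := nonempty_of_mem hs
  exact ⟨i₀, s, hs, fun i hi => hsρ i hi i₀ hi₀⟩

variable [∀ i, IsFiniteMeasure (ρ i)]

theorem TVCauchy.tendsto_apply (hρ : TVCauchy ρ l) {A : Set T} (hA : MeasurableSet A) :
    Tendsto (fun i => ρ i A) l (𝓝 (limsup (fun i => ρ i A) l)) :=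
  ENNReal.tendsto_limsup_of_forall_eventually_le_add fun ε hε =>
    (hρ ε hε).mono fun p hp => (apply_le_add_tvDist (β := ρ p.2) hA).trans (by gcongr)

theorem TVCauchy.exists_eventually_tail_le (hρ : TVCauchy ρ l) {f : ℕ → Set T}
    (hf : ∀ k, MeasurableSet (f k)) (hdisj : Pairwise (Function.onFun Disjoint f)) {ε : ℝ≥0∞}
    (hε : 0 < ε) : ∃ K, ∀ᶠ i in l, ρ i (⋃ k, f (k + K)) ≤ ε + ε := by
  obtain ⟨i₀, s, hs, hsρ⟩ := hρ.exists_mem_forall_tvDist_le hε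
  obtain ⟨K, hK⟩ := ((ENNReal.tendsto_sum_nat_add (fun k => ρ i₀ (f k))
    (by rw [← measure_iUnion hdisj hf]; finiteness)).eventually_lt_const hε).exists
  rw [← measure_iUnion (hdisj.comp_of_injective (add_left_injective K)) fun k => hf _] at hK
  exact ⟨K, eventually_of_mem hs fun i hi =>
    (apply_le_add_tvDist (MeasurableSet.iUnion fun k => hf _)).trans
      (add_le_add hK.le (hsρ i hi))⟩

theorem TVCauchy.limsup_iUnion (hρ : TVCauchy ρ l) {f : ℕ → Set T}
    (hf : ∀ k, MeasurableSet (f k)) (hdisj : Pairwise (Function.onFun Disjoint f)) :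
    limsup (fun i => ρ i (⋃ k, f k)) l = ∑' k, limsup (fun i => ρ i (f k)) l := by
  have hU := hρ.tendsto_apply (MeasurableSet.iUnion hf)
  have hsum : ∀ K, Tendsto (fun i => ∑ k ∈ Finset.range K, ρ i (f k)) l
      (𝓝 (∑ k ∈ Finset.range K, limsup (fun i => ρ i (f k)) l)) := fun K =>
    tendsto_finsetSum _ fun k _ => hρ.tendsto_apply (hf k)
  have hsplit : ∀ i K,
      ρ i (⋃ k, f k) = ∑ k ∈ Finset.range K, ρ i (f k) + ρ i (⋃ k, f (k + K)) := fun i K => by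
    rw [measure_iUnion hdisj hf,
      measure_iUnion (hdisj.comp_of_injective (add_left_injective K)) fun k => hf _,
      ENNReal.summable.sum_add_tsum_nat_add']
  refine le_antisymm ?_ ?_
  · refine ENNReal.le_of_forall_pos_le_add fun ε hε _ => ?_
    obtain ⟨K, hK⟩ := hρ.exists_eventually_tail_le (ε := ε / 2) hf hdisj
      (ENNReal.half_pos (by exact_mod_cast hε.ne'))
    calc limsup (fun i => ρ i (⋃ k, f k)) l
        ≤ ∑ k ∈ Finset.range K, limsup (fun i => ρ i (f k)) l + ε :=
          le_of_tendsto_of_tendsto hU ((hsum K).add tendsto_const_nhds) <| hK.mono fun i hi => by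
            dsimp only; rw [hsplit i K, ← ENNReal.add_halves (ε : ℝ≥0∞)]; gcongr
      _ ≤ ∑' k, limsup (fun i => ρ i (f k)) l + ε := by gcongr; exact ENNReal.sum_le_tsum _
  · refine ENNReal.tsum_eq_iSup_nat ▸ iSup_le fun K => ?_
    refine le_of_tendsto_of_tendsto (hsum K) hU (Eventually.of_forall fun i => ?_)
    simp only [hsplit i K, le_self_add]

theorem TVCauchy.exists_tendsto_measure (hρ : TVCauchy ρ l) :
    ∃ L : Measure T, IsFiniteMeasure L ∧
      ∀ A, MeasurableSet A → Tendsto (fun i => ρ i A) l (𝓝 (L A)) := by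
  let L : Measure T := Measure.ofMeasurable (fun A _ => limsup (fun i => ρ i A) l)
    (by simp) fun f hf hdisj => hρ.limsup_iUnion hf hdisj
  have hL : ∀ A, MeasurableSet A → Tendsto (fun i => ρ i A) l (𝓝 (L A)) := fun A hA => by
    rw [Measure.ofMeasurable_apply A hA]
    exact hρ.tendsto_apply hA
  obtain ⟨i₀, s, hs, hsρ⟩ := hρ.exists_mem_forall_tvDist_le one_pos
  have hbound : L Set.univ ≤ ρ i₀ Set.univ + 1 :=
    le_of_tendsto (hL _ MeasurableSet.univ) <| eventually_of_mem hs fun i hi =>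
      (apply_le_add_tvDist MeasurableSet.univ).trans (by gcongr; exact hsρ i hi)
  exact ⟨L, ⟨hbound.trans_lt (by finiteness)⟩, hL⟩

end TVCauchy

theorem ProbabilityTheory.Kernel.exists_tendsto_of_tvCauchy {X U : Type*} [MeasurableSpace X]
    [MeasurableSpace U] (μ : Kernel X U) [IsFiniteKernel μ] (μs : ℕ → Kernel X U)
    [∀ n, IsFiniteKernel (μs n)]
    {W : ℕ → Set X} (hW : ∀ n, MeasurableSet (W n))
    (hcauchy : ∀ q, (∃ᶠ n in atTop, q ∈ W n) →
      TVCauchy (fun n => μs n q) (atTop ⊓ 𝓟 {n | q ∈ W n})) :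
    ∃ μ' : Kernel X U, (∀ q, IsFiniteMeasure (μ' q)) ∧
      (∀ q, ¬(∃ᶠ n in atTop, q ∈ W n) → μ' q = μ q) ∧
      ∀ q, (∃ᶠ n in atTop, q ∈ W n) → ∀ A, MeasurableSet A →
        Tendsto (fun n => μs n q A) (atTop ⊓ 𝓟 {n | q ∈ W n}) (𝓝 (μ' q A)) := by
  classical
  have hne : ∀ q ∈ limsup W atTop, (atTop ⊓ 𝓟 {n | q ∈ W n}).NeBot := fun q hq =>
    frequently_mem_iff_neBot.1 (mem_limsup_iff_frequently_mem.1 hq)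
  choose L hLfin hL using fun q (hq : q ∈ limsup W atTop) =>
    have := hne q hq
    (hcauchy q (mem_limsup_iff_frequently_mem.1 hq)).exists_tendsto_measure
  let κ : X → Measure U := fun q => if hq : q ∈ limsup W atTop then L q hq else μ q
  -- `L q` is a limit along a filter that depends on `q`; as a `limsup` along `atTop` of
  -- indicators it becomes measurable in `q`.
  have hκ_apply : ∀ A, MeasurableSet A → (fun q => κ q A) = (limsup W atTop).piecewise
      (fun q => limsup (fun n => (W n).indicator (fun q => μs n q A) q) atTop)
      (fun q => μ q A) := fun A hA => funext fun q => by
    by_cases hq : q ∈ limsup W atTop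
    · have := hne q hq
      simp only [κ, dif_pos hq, Set.piecewise_eq_of_mem _ _ _ hq]
      exact (hL q hq A hA).limsup_eq.symm.trans (ENNReal.limsup_indicator _ _ _).symm
    · simp only [κ, dif_neg hq, Set.piecewise_eq_of_notMem _ _ _ hq]
  have hκ : Measurable κ := Measure.measurable_of_measurable_coe _ fun A hA => by
    rw [hκ_apply A hA]
    exact Measurable.piecewise (MeasurableSet.measurableSet_limsup hW)
      (Measurable.limsup fun n => ((μs n).measurable_coe hA).indicator (hW n))
      (μ.measurable_coe hA)
  refine ⟨⟨κ, hκ⟩, fun q => ?_, fun q hq => dif_neg (mt mem_limsup_iff_frequently_mem.1 hq),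
    fun q hq => ?_⟩
  · by_cases hq : q ∈ limsup W atTop
    · simpa only [Kernel.coe_mk, κ, dif_pos hq] using hLfin q hq
    · simp only [Kernel.coe_mk, κ, dif_neg hq]; infer_instance
  · have hq' := mem_limsup_iff_frequently_mem.2 hq
    simpa only [Kernel.coe_mk, κ, dif_pos hq'] using hL q hq'

section Approximation

variable {T ι : Type*} [MeasurableSpace T] {l : Filter ι} {ρ : ι → Measure T}
  [∀ i, IsFiniteMeasure (ρ i)] {β : Measure T} [IsFiniteMeasure β]

theorem tvDist_le_of_tendsto_apply [l.NeBot] {L : Measure T} [IsFiniteMeasure L]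
    (hL : ∀ A, MeasurableSet A → Tendsto (fun i => ρ i A) l (𝓝 (L A))) {c : ℝ≥0∞}
    (hc : ∀ᶠ i in l, tvDist (ρ i) β ≤ c) : tvDist L β ≤ c + c :=
  tvDist_le_of_forall_apply fun A hA =>
    ⟨le_of_tendsto (hL A hA) <| hc.mono fun i hi =>
        (apply_le_add_tvDist hA).trans (by gcongr),
      ge_of_tendsto ((hL A hA).add tendsto_const_nhds) <| hc.mono fun i hi =>
        (apply_le_add_tvDist hA).trans (by rw [tvDist_comm]; gcongr)⟩

theorem tendsto_apply_of_tendsto_tvDist (h : Tendsto (fun i => tvDist (ρ i) β) l (𝓝 0))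
    {A : Set T} (hA : MeasurableSet A) : Tendsto (fun i => ρ i A) l (𝓝 (β A)) := by
  have hlower : Tendsto (fun i => β A - tvDist (ρ i) β) l (𝓝 (β A)) := by
    simpa using ENNReal.Tendsto.sub tendsto_const_nhds h (Or.inl (measure_ne_top β A))
  have hupper : Tendsto (fun i => β A + tvDist (ρ i) β) l (𝓝 (β A)) := by
    simpa using tendsto_const_nhds.add h
  refine tendsto_of_tendsto_of_tendsto_of_le_of_le hlower hupper (fun i => ?_)
    fun i => apply_le_add_tvDist hA
  rw [tsub_le_iff_right, tvDist_comm]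
  exact apply_le_add_tvDist hA

theorem MeasureTheory.Measure.eq_of_tendsto_tvDist [l.NeBot] {L : Measure T}
    (hL : ∀ A, MeasurableSet A → Tendsto (fun i => ρ i A) l (𝓝 (L A)))
    (hβ : Tendsto (fun i => tvDist (ρ i) β) l (𝓝 0)) : L = β :=
  Measure.ext fun A hA => tendsto_nhds_unique (hL A hA) (tendsto_apply_of_tendsto_tvDist hβ hA)

end Approximation

section Continuity

variable {X U : Type*} [TopologicalSpace X] [MeasurableSpace U]

theorem tvDist_le_of_dense {f g : X → Measure U} [∀ x, IsFiniteMeasure (f x)]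
    [∀ x, IsFiniteMeasure (g x)] {D : Set X} (hD : Dense D) {x : X}
    (hf : Tendsto (fun y => tvDist (f y) (f x)) (𝓝 x) (𝓝 0))
    (hg : Tendsto (fun y => tvDist (g y) (g x)) (𝓝 x) (𝓝 0)) {c : ℝ≥0∞}
    (hc : ∀ᶠ y in 𝓝 x, y ∈ D → tvDist (f y) (g y) ≤ c) : tvDist (f x) (g x) ≤ c := by
  have := mem_closure_iff_nhdsWithin_neBot.1 (hD x)
  have hlim : Tendsto (fun y => tvDist (f y) (f x) + c + tvDist (g y) (g x)) (𝓝[D] x)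
      (𝓝 (0 + c + 0)) :=
    ((hf.mono_left nhdsWithin_le_nhds).add tendsto_const_nhds).add
      (hg.mono_left nhdsWithin_le_nhds)
  refine ge_of_tendsto (by simpa using hlim) ?_
  filter_upwards [nhdsWithin_le_nhds hc, self_mem_nhdsWithin] with y hyc hyD
  calc tvDist (f x) (g x) ≤ tvDist (f x) (f y) + tvDist (f y) (g x) := tvDist_triangle _
    _ ≤ tvDist (f x) (f y) + (tvDist (f y) (g y) + tvDist (g y) (g x)) := by
        gcongr; exact tvDist_triangle _
    _ ≤ tvDist (f y) (f x) + c + tvDist (g y) (g x) := by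
        rw [tvDist_comm (f x), add_assoc]; gcongr; exact hyc hyD

theorem measure_univ_le_of_dense {f : X → Measure U} [∀ x, IsFiniteMeasure (f x)] {D : Set X}
    (hD : Dense D) {x : X} (hf : Tendsto (fun y => tvDist (f y) (f x)) (𝓝 x) (𝓝 0))
    {c : ℝ≥0∞} (hc : ∀ y ∈ D, f y Set.univ ≤ c) : f x Set.univ ≤ c := by
  rw [← tvDist_zero_right]
  have h0 : Tendsto (fun _ : X => tvDist (0 : Measure U) 0) (𝓝 x) (𝓝 0) := by
    simp only [tvDist_zero_right, Measure.coe_zero, Pi.zero_apply, tendsto_const_nhds]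
  refine tvDist_le_of_dense (g := fun _ => 0) hD hf h0 ?_
  exact Eventually.of_forall fun y hy => (tvDist_zero_right (f y)).trans_le (hc y hy)

theorem tendsto_tvDist_of_forall_approx {f : X → Measure U} {F : ℕ → X → Measure U}
    [∀ x, IsFiniteMeasure (f x)] [∀ n x, IsFiniteMeasure (F n x)] {t : Set X} {x : X}
    (hx : x ∈ t)
    (hF : ∀ ε > 0, ∃ n, Tendsto (fun y => tvDist (F n y) (F n x)) (𝓝[t] x) (𝓝 0) ∧
      ∀ᶠ y in 𝓝[t] x, tvDist (f y) (F n y) ≤ ε) :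
    Tendsto (fun y => tvDist (f y) (f x)) (𝓝[t] x) (𝓝 0) := by
  refine ENNReal.tendsto_nhds_zero.2 fun ε hε => ?_
  obtain ⟨n, hcont, happrox⟩ := hF (ε / 3) (ENNReal.div_pos hε.ne' (by norm_num))
  have hxF : tvDist (F n x) (f x) ≤ ε / 3 := by
    rw [tvDist_comm]; exact happrox.self_of_nhdsWithin hx
  filter_upwards [happrox, ENNReal.tendsto_nhds_zero.1 hcont (ε / 3)
    (ENNReal.div_pos hε.ne' (by norm_num))] with y hy hy'
  calc tvDist (f y) (f x) ≤ tvDist (f y) (F n y) + tvDist (F n y) (f x) := tvDist_triangle _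
    _ ≤ tvDist (f y) (F n y) + (tvDist (F n y) (F n x) + tvDist (F n x) (f x)) := by
        gcongr; exact tvDist_triangle _
    _ ≤ ε / 3 + (ε / 3 + ε / 3) := by gcongr
    _ = ε := by rw [← add_assoc, ENNReal.add_thirds]

end Continuity

section Patching

variable {S U : Type*} [MeasurableSpace S] [MeasurableSpace U]

def approxSet (μ : Kernel (S × ℝ) U) (μs : ℕ → Kernel (S × ℝ) U) (h : ℕ → S × ℝ → ℝ)
    (x : ℝ) : Set S :=
  {s | ∀ n, tvDist (μ (s, x)) (μs n (s, x)) ≤ ENNReal.ofReal (h n (s, x))}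

variable {μ : Kernel (S × ℝ) U} [IsFiniteKernel μ] {μs : ℕ → Kernel (S × ℝ) U}
  [∀ n, IsFiniteKernel (μs n)] {G : ℕ → Set ℝ} {h : ℕ → S × ℝ → ℝ}

theorem eq_of_mem_approxSet {μ' : S × ℝ → Measure U}
    (hout : ∀ q, ¬(∃ᶠ n in atTop, q.2 ∈ G n) → μ' q = μ q)
    (hlim : ∀ q, (∃ᶠ n in atTop, q.2 ∈ G n) → ∀ A, MeasurableSet A →
      Tendsto (fun n => μs n q A) (atTop ⊓ 𝓟 {n | q.2 ∈ G n}) (𝓝 (μ' q A)))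
    (hh : ∀ q, Tendsto (fun n => h n q) atTop (𝓝 0)) {x : ℝ} {s : S}
    (hs : s ∈ approxSet μ μs h x) : μ' (s, x) = μ (s, x) := by
  by_cases hx : ∃ᶠ n in atTop, x ∈ G n
  · have : (atTop ⊓ 𝓟 {n | x ∈ G n}).NeBot := frequently_mem_iff_neBot.1 hx
    have hh' : Tendsto (fun n => ENNReal.ofReal (h n (s, x))) (atTop ⊓ 𝓟 {n | x ∈ G n})
        (𝓝 0) := by
      simpa using (ENNReal.tendsto_ofReal (hh (s, x))).mono_left inf_le_left
    refine Measure.eq_of_tendsto_tvDist (hlim (s, x) hx) <|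
      tendsto_of_tendsto_of_tendsto_of_le_of_le tendsto_const_nhds hh' (fun _ => zero_le) ?_
    exact fun n => (tvDist_comm _ _).trans_le (hs n)
  · exact hout (s, x) hx

variable [TopologicalSpace S]

theorem tvDist_le_of_dense_approxSet {x : ℝ} (hD : Dense (approxSet μ μs h x)) {n m : ℕ} {s : S}
    (hn : Tendsto (fun q => tvDist (μs n q) (μs n (s, x))) (𝓝 (s, x)) (𝓝 0))
    (hm : Tendsto (fun q => tvDist (μs m q) (μs m (s, x))) (𝓝 (s, x)) (𝓝 0))
    {B : Set (S × ℝ)} (hB : IsOpen B) (hsB : (s, x) ∈ B) {c : ℝ≥0∞}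
    (hc : ∀ q ∈ B, ENNReal.ofReal (h n q) ≤ c ∧ ENNReal.ofReal (h m q) ≤ c) :
    tvDist (μs n (s, x)) (μs m (s, x)) ≤ c + c := by
  have hslice : Tendsto (fun s' : S => (s', x)) (𝓝 s) (𝓝 (s, x)) :=
    (Continuous.prodMk_left x).tendsto s
  refine tvDist_le_of_dense (f := fun s' => μs n (s', x)) (g := fun s' => μs m (s', x)) hD
    (hn.comp hslice) (hm.comp hslice) ?_
  filter_upwards [hslice (hB.mem_nhds hsB)] with s' hs'B hs'D
  calc tvDist (μs n (s', x)) (μs m (s', x))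
      ≤ tvDist (μs n (s', x)) (μ (s', x)) + tvDist (μ (s', x)) (μs m (s', x)) :=
        tvDist_triangle _
    _ ≤ c + c := by
      rw [tvDist_comm (μs n _)]
      exact add_le_add ((hs'D n).trans (hc _ hs'B).1) ((hs'D m).trans (hc _ hs'B).2)

omit [IsFiniteKernel μ] [∀ n, IsFiniteKernel (μs n)] in
theorem measure_univ_le_bound_of_dense_approxSet {μ' : S × ℝ → Measure U}
    [∀ q, IsFiniteMeasure (μ' q)]
    (hD : ∀ x, Dense (approxSet μ μs h x)) (hout : ∀ q, ¬(∃ᶠ n in atTop, q.2 ∈ G n) → μ' q = μ q)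
    (heq : ∀ x, ∀ s ∈ approxSet μ μs h x, μ' (s, x) = μ (s, x))
    (hcont : ∀ p ∈ {q : S × ℝ | ∃ᶠ n in atTop, q.2 ∈ G n},
      Tendsto (fun q => tvDist (μ' q) (μ' p)) (𝓝[{q | ∃ᶠ n in atTop, q.2 ∈ G n}] p) (𝓝 0))
    (q : S × ℝ) : μ' q Set.univ ≤ Kernel.bound μ := by
  obtain ⟨s, x⟩ := q
  by_cases hx : ∃ᶠ n in atTop, x ∈ G n
  · refine measure_univ_le_of_dense (f := fun s' => μ' (s', x)) (hD x) ?_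
      fun s' hs' => (heq x s' hs').symm ▸ μ.measure_le_bound _ _
    exact (hcont (s, x) hx).comp (tendsto_nhdsWithin_iff.2
      ⟨(Continuous.prodMk_left x).tendsto s, Eventually.of_forall fun _ => hx⟩)
  · rw [hout _ hx]
    exact μ.measure_le_bound _ _

variable (hD : ∀ x, Dense (approxSet μ μs h x))
  (hcont : ∀ n p, p.2 ∈ G n → Tendsto (fun q => tvDist (μs n q) (μs n p)) (𝓝 p) (𝓝 0))
  {B : Set (S × ℝ)} (hB : IsOpen B) (hh : TendstoUniformlyOn h (fun _ => 0) atTop B)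
include hD hcont hB hh

theorem exists_forall_tvDist_le_of_dense_approxSet {ε : ℝ≥0∞} (hε : 0 < ε) :
    ∃ N, ∀ n ≥ N, ∀ m ≥ N, ∀ q ∈ B, q.2 ∈ G n → q.2 ∈ G m → tvDist (μs n q) (μs m q) ≤ ε := by
  obtain ⟨N, hN⟩ := eventually_atTop.1 (hh.eventually_forall_ofReal_le (ENNReal.half_pos hε.ne'))
  refine ⟨N, fun n hn m hm q hq hqn hqm => ?_⟩
  rw [← ENNReal.add_halves ε]
  exact tvDist_le_of_dense_approxSet (hD q.2) (hcont n q hqn) (hcont m q hqm) hB hq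
    fun q' hq' => ⟨hN n hn q' hq', hN m hm q' hq'⟩

theorem tvCauchy_of_dense_approxSet {q : S × ℝ} (hq : q ∈ B) :
    TVCauchy (fun n => μs n q) (atTop ⊓ 𝓟 {n | q.2 ∈ G n}) := fun ε hε => by
  obtain ⟨N, hN⟩ := exists_forall_tvDist_le_of_dense_approxSet hD hcont hB hh hε
  have hl : ∀ᶠ n in atTop ⊓ 𝓟 {n | q.2 ∈ G n}, N ≤ n ∧ q.2 ∈ G n :=
    inter_mem_inf (eventually_ge_atTop N) (mem_principal_self _)
  filter_upwards [hl.prod_mk hl] with p hp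
  exact hN _ hp.1.1 _ hp.2.1 q hq hp.1.2 hp.2.2

theorem tendsto_tvDist_of_dense_approxSet (hG : ∀ n, IsOpen (G n)) {μ' : S × ℝ → Measure U}
    [∀ q, IsFiniteMeasure (μ' q)] (hμ' : ∀ q, (∃ᶠ n in atTop, q.2 ∈ G n) → ∀ A, MeasurableSet A →
      Tendsto (fun n => μs n q A) (atTop ⊓ 𝓟 {n | q.2 ∈ G n}) (𝓝 (μ' q A)))
    {p : S × ℝ} (hpB : p ∈ B) (hp : ∃ᶠ n in atTop, p.2 ∈ G n) :
    Tendsto (fun q => tvDist (μ' q) (μ' p)) (𝓝[{q | ∃ᶠ n in atTop, q.2 ∈ G n}] p) (𝓝 0) := by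
  refine tendsto_tvDist_of_forall_approx (F := fun n => μs n) hp fun ε hε => ?_
  obtain ⟨N, hN⟩ :=
    exists_forall_tvDist_le_of_dense_approxSet hD hcont hB hh (ENNReal.half_pos hε.ne')
  obtain ⟨n, hnN, hpn⟩ := frequently_atTop.1 hp N
  refine ⟨n, (hcont n p hpn).mono_left nhdsWithin_le_nhds, ?_⟩
  filter_upwards [nhdsWithin_le_nhds (hB.mem_nhds hpB),
    nhdsWithin_le_nhds (continuous_snd.continuousAt.preimage_mem_nhds ((hG n).mem_nhds hpn)),
    self_mem_nhdsWithin] with q hqB hqn hq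
  have : (atTop ⊓ 𝓟 {m | q.2 ∈ G m}).NeBot := frequently_mem_iff_neBot.1 hq
  have hl : ∀ᶠ m in atTop ⊓ 𝓟 {m | q.2 ∈ G m}, N ≤ m ∧ q.2 ∈ G m :=
    inter_mem_inf (eventually_ge_atTop N) (mem_principal_self _)
  rw [← ENNReal.add_halves ε]
  exact tvDist_le_of_tendsto_apply (hμ' q hq) (hl.mono fun m hm => hN m hm.1 n hnN q hqB hm.2 hqn)

end Patching

theorem stmt_17_general {S U : Type*} [MetricSpace S] [MeasurableSpace S] [MeasurableSpace U]
    (ν : Kernel ℝ S)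
    (hν : ∀ x : ℝ, ∀ G : Set S, IsOpen G → G.Nonempty → 0 < ν x G)
    (μ : Kernel (S × ℝ) U) [IsFiniteKernel μ]
    (μs : ℕ → Kernel (S × ℝ) U) [hμs : ∀ n, IsFiniteKernel (μs n)]
    (G : ℕ → Set ℝ) (hG : ∀ n, IsOpen (G n))
    (hcont : ∀ n, ∀ p ∈ Set.univ ×ˢ G n,
      Tendsto (fun q => tvDist (μs n q) (μs n p)) (nhdsWithin p (Set.univ ×ˢ G n)) (nhds 0))
    (h : ℕ → S × ℝ → ℝ)
    (hto0 : ∀ B : Set (S × ℝ), Bornology.IsBounded B →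
      TendstoUniformlyOn h (fun _ => 0) atTop B)
    (hnull : ∀ (n : ℕ) (x : ℝ),
      ν x {s : S | ENNReal.ofReal (h n (s, x)) < tvDist (μ (s, x)) (μs n (s, x))} = 0) :
    ∃ μ' : Kernel (S × ℝ) U, IsFiniteKernel μ' ∧
      (∀ x : ℝ, ν x {s : S | μ (s, x) ≠ μ' (s, x)} = 0) ∧
      ∀ p ∈ Set.univ ×ˢ (⋂ n, ⋃ k, ⋃ _ : n ≤ k, G k),
        Tendsto (fun q => tvDist (μ' q) (μ' p))
          (nhdsWithin p (Set.univ ×ˢ (⋂ n, ⋃ k, ⋃ _ : n ≤ k, G k))) (nhds 0) := by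
  have hT : Set.univ ×ˢ (⋂ n, ⋃ k, ⋃ _ : n ≤ k, G k) = {q : S × ℝ | ∃ᶠ n in atTop, q.2 ∈ G n} := by
    ext q; simp [frequently_atTop]
  rw [hT]
  have hcontN : ∀ n p, p.2 ∈ G n → Tendsto (fun q => tvDist (μs n q) (μs n p)) (𝓝 p) (𝓝 0) :=
    fun n p hp => by
      simpa only [nhdsWithin_eq_nhds.2 ((isOpen_univ.prod (hG n)).mem_nhds ⟨trivial, hp⟩)]
        using hcont n p ⟨trivial, hp⟩
  have hgood : ∀ x, ∀ᵐ s ∂ν x, s ∈ approxSet μ μs h x := fun x =>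
    ae_all_iff.2 fun n => ae_iff.2 (by simpa only [not_le] using hnull n x)
  have hD : ∀ x, Dense (approxSet μ μs h x) := fun x =>
    have : (ν x).IsOpenPosMeasure := ⟨fun V hV hne => (hν x V hV hne).ne'⟩
    Measure.dense_of_ae (hgood x)
  have hball : ∀ p : S × ℝ, TendstoUniformlyOn h (fun _ => 0) atTop (Metric.ball p 1) :=
    fun p => hto0 _ Metric.isBounded_ball
  obtain ⟨μ', hμ'fin, hμ'out, hμ'lim⟩ := Kernel.exists_tendsto_of_tvCauchy μ μs
    (W := fun n => Prod.snd ⁻¹' G n) (fun n => measurable_snd (hG n).measurableSet)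
    fun q _ => tvCauchy_of_dense_approxSet hD hcontN Metric.isOpen_ball (hball q)
      (Metric.mem_ball_self one_pos)
  have hcont' : ∀ p ∈ {q : S × ℝ | ∃ᶠ n in atTop, q.2 ∈ G n},
      Tendsto (fun q => tvDist (μ' q) (μ' p)) (𝓝[{q | ∃ᶠ n in atTop, q.2 ∈ G n}] p) (𝓝 0) :=
    fun p hp =>
    tendsto_tvDist_of_dense_approxSet hD hcontN Metric.isOpen_ball (hball p) hG hμ'lim
      (Metric.mem_ball_self one_pos) hp
  have heq : ∀ x, ∀ s ∈ approxSet μ μs h x, μ' (s, x) = μ (s, x) := fun x s =>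
    eq_of_mem_approxSet hμ'out hμ'lim fun q =>
      (hto0 {q} Bornology.isBounded_singleton).tendsto_at rfl
  exact ⟨μ', ⟨⟨Kernel.bound μ, Kernel.bound_lt_top μ,
      measure_univ_le_bound_of_dense_approxSet hD hμ'out heq hcont'⟩⟩,
    fun x => measure_mono_null (fun s hs hsD => hs (heq x s hsD).symm) (hgood x), hcont'⟩

/-- Patching lemma for kernels: if bounded kernels `μ_n` from `S × ℝ` to `U` are TV-continuous on
`S × G_n` and approximate `μ` up to `h_n → 0` (uniformly on bounded sets) outside `ν`-null sets,
then `μ` agrees `ν`-a.e. with a bounded kernel `μ′` that is TV-continuous on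
`S × limsup_n G_n`. -/
theorem stmt_17 {S U : Type*} [MetricSpace S] [CompleteSpace S] [SecondCountableTopology S]
    [MeasurableSpace S] [BorelSpace S] [MeasurableSpace U] [StandardBorelSpace U]
    (ν : Kernel ℝ S)
    (hν : ∀ x : ℝ, ∀ G : Set S, IsOpen G → G.Nonempty → 0 < ν x G)
    (μ : Kernel (S × ℝ) U) [IsFiniteKernel μ]
    (μs : ℕ → Kernel (S × ℝ) U) [hμs : ∀ n, IsFiniteKernel (μs n)]
    (G : ℕ → Set ℝ) (hG : ∀ n, IsOpen (G n))
    (hcont : ∀ n, ∀ p ∈ Set.univ ×ˢ G n,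
      Tendsto (fun q => tvDist (μs n q) (μs n p)) (nhdsWithin p (Set.univ ×ˢ G n)) (nhds 0))
    (h : ℕ → S × ℝ → ℝ) (hmeas : ∀ n, Measurable (h n)) (hpos : ∀ n q, 0 ≤ h n q)
    (hto0 : ∀ B : Set (S × ℝ), Bornology.IsBounded B →
      TendstoUniformlyOn h (fun _ => 0) atTop B)
    (hnull : ∀ (n : ℕ) (x : ℝ),
      ν x {s : S | ENNReal.ofReal (h n (s, x)) < tvDist (μ (s, x)) (μs n (s, x))} = 0) :
    ∃ μ' : Kernel (S × ℝ) U, IsFiniteKernel μ' ∧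
      (∀ x : ℝ, ν x {s : S | μ (s, x) ≠ μ' (s, x)} = 0) ∧
      ∀ p ∈ Set.univ ×ˢ (⋂ n, ⋃ k, ⋃ _ : n ≤ k, G k),
        Tendsto (fun q => tvDist (μ' q) (μ' p))
          (nhdsWithin p (Set.univ ×ˢ (⋂ n, ⋃ k, ⋃ _ : n ≤ k, G k))) (nhds 0) :=
  stmt_17_general ν hν μ μs (hμs := hμs) G hG hcont h hto0 hnull
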